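/- Let n ≥ 2 be an integer and let φ be a formal power series over ℚ with constant coefficient 1 such that φ^n = (g_n)^{n−1}, where g_n is regarded as a formal power series. Then for every index j with 0 ≤ j ≤ n−2, the coefficient of X^j in φ equals the coefficient of X^j in the polynomial g_{n−1}. In other words, the truncation of g_n^{(n−1)/n} up to degree n−2 equals g_{n−1}. -/

import Mathlib

open Polynomial PowerSeries

/-- The polynomial `g_n(x) = Σ_{k=0}^{⌊n/2⌋} (n/(n−k))·binom(n−k, k)·x^k` over ℚ
for `n ≥ 1`, with `g_0 = 2`. -/
noncomputable def gP (n : ℕ) : Polynomial ℚ :=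
  if n = 0 then Polynomial.C 2
  else ∑ k ∈ Finset.range (n / 2 + 1),
    Polynomial.C ((n : ℚ) / ((n : ℚ) - (k : ℚ)) * (((n - k).choose k : ℕ) : ℚ)) *
      Polynomial.X ^ k

def gc (n k : ℕ) : ℚ := (n : ℚ) / ((n : ℚ) - (k : ℚ)) * (((n - k).choose k : ℕ) : ℚ)

lemma gc_zero (n : ℕ) (hn : n ≠ 0) : gc n 0 = 1 := by
  have : (n:ℚ) ≠ 0 := Nat.cast_ne_zero.mpr hn
  simp [gc, div_self this]

lemma gc_eq_zero_of_big (n k : ℕ) (h : n / 2 < k) : gc n k = 0 := by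
  have h2 : n - k < k := by omega
  simp [gc, Nat.choose_eq_zero_of_lt h2]

lemma gP_eq (n : ℕ) (hn : n ≠ 0) :
    gP n = ∑ k ∈ Finset.range (n + 1), Polynomial.C (gc n k) * Polynomial.X ^ k := by
  rw [gP, if_neg hn]
  refine Finset.sum_subset ?_ ?_
  · intro k hk; simp only [Finset.mem_range] at *; omega
  · intro k hk hk2
    simp only [Finset.mem_range] at *
    have : gc n k = 0 := gc_eq_zero_of_big n k (by omega)
    rw [show ((n : ℚ) / ((n : ℚ) - (k : ℚ)) * (((n - k).choose k : ℕ) : ℚ)) = gc n k from rfl, this]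
    simp

lemma gP_coeff (n : ℕ) (hn : n ≠ 0) (j : ℕ) (hj : j ≤ n) : (gP n).coeff j = gc n j := by
  rw [gP_eq n hn, Polynomial.finset_sum_coeff]
  simp only [Polynomial.coeff_C_mul, Polynomial.coeff_X_pow, mul_ite, mul_one, mul_zero]
  rw [Finset.sum_ite_eq (Finset.range (n+1)) j (gc n)]
  simp [Finset.mem_range]; omega

lemma gP_coeff_big (n : ℕ) (hn : n ≠ 0) (j : ℕ) (hj : n < j) : (gP n).coeff j = 0 := by
  rw [gP_eq n hn, Polynomial.finset_sum_coeff]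
  simp only [Polynomial.coeff_C_mul, Polynomial.coeff_X_pow, mul_ite, mul_one, mul_zero]
  rw [Finset.sum_ite_eq (Finset.range (n+1)) j (gc n)]
  simp [Finset.mem_range]; omega

lemma key (s j : ℕ) :
    ((j:ℚ) + 1) * (s.choose (j+1) : ℚ) = ((s:ℚ) - j) * (s.choose j : ℚ) := by
  rcases le_or_gt j s with h | h
  · have := Nat.choose_succ_right_eq s j
    have hcast : (s.choose (j+1) : ℚ) * ((j:ℚ)+1) = (s.choose j : ℚ) * ((s:ℚ) - (j:ℚ)) := by
      have := congrArg (Nat.cast : ℕ → ℚ) this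
      push_cast [Nat.cast_sub h] at this
      linarith [this]
    linarith [hcast]
  · rw [Nat.choose_eq_zero_of_lt h, Nat.choose_eq_zero_of_lt (by omega)]
    simp

lemma gc_rec (m k : ℕ) (hm : 1 ≤ m) (hk : 1 ≤ k) :
    gc (m+2) k = gc (m+1) k + gc m (k-1) := by
  rcases le_or_gt k m with hkm | hkm
  · have h1 : ((m:ℚ) + 2 - k) ≠ 0 := by
      have : (k:ℚ) ≤ m := by exact_mod_cast hkm
      intro h; nlinarith
    have h2 : ((m:ℚ) + 1 - k) ≠ 0 := by
      have : (k:ℚ) ≤ m := by exact_mod_cast hkm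
      intro h; nlinarith
    obtain ⟨j, rfl⟩ : ∃ j, k = j + 1 := ⟨k - 1, by omega⟩
    have e1 : m + 2 - (j+1) = (m - j) + 1 := by omega
    have e2 : m + 1 - (j+1) = m - j := by omega
    have e3 : m - (j+1-1) = m - j := by omega
    have e4 : (j+1) - 1 = j := rfl
    simp only [gc, e1, e2, e3, e4]
    have hj : j ≤ m := by omega
    have hs : ((m - j : ℕ) : ℚ) = (m:ℚ) - j := by push_cast [Nat.cast_sub hj]; ring_nf
    rw [Nat.choose_succ_succ (m - j) j]
    have hkey := key (m - j) j
    push_cast at h1 h2 ⊢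
    rw [hs] at hkey
    have hq : (m:ℚ) - j ≠ 0 := fun h => h2 (by linarith)
    have hq1 : (m:ℚ) - j + 1 ≠ 0 := fun h => h1 (by linarith)
    have d1 : ((m:ℚ) + 2 - ((j:ℚ)+1)) = ((m:ℚ) - j) + 1 := by ring
    have d2 : ((m:ℚ) + 1 - ((j:ℚ)+1)) = ((m:ℚ) - j) := by ring
    rw [d1, d2]
    field_simp
    linear_combination (-(1:ℚ)) * hkey
  · have c1 : (m + 2 - k).choose k = 0 := Nat.choose_eq_zero_of_lt (by omega)
    have c2 : (m + 1 - k).choose k = 0 := Nat.choose_eq_zero_of_lt (by omega)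
    have c3 : (m - (k-1)).choose (k-1) = 0 := Nat.choose_eq_zero_of_lt (by omega)
    simp [gc, c1, c2, c3]

lemma gP_two : gP 2 = gP 1 + Polynomial.X * gP 0 := by
  rw [gP_eq 2 (by norm_num), gP_eq 1 (by norm_num)]
  rw [show gP 0 = Polynomial.C 2 from if_pos rfl]
  have h0 : gc 2 0 = 1 := gc_zero 2 (by norm_num)
  have h1 : gc 2 1 = 2 := by norm_num [gc]
  have h2 : gc 2 2 = 0 := by norm_num [gc]
  have h1' : gc 1 0 = 1 := gc_zero 1 (by norm_num)
  have h1'' : gc 1 1 = 0 := by norm_num [gc]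
  simp [Finset.sum_range_succ, h0, h1, h2, h1', h1'']

lemma gP_rec (m : ℕ) : gP (m+2) = gP (m+1) + Polynomial.X * gP m := by
  rcases Nat.eq_zero_or_pos m with rfl | hm
  · exact gP_two
  · ext j
    rw [Polynomial.coeff_add]
    rcases Nat.eq_zero_or_pos j with rfl | hj
    · rw [Polynomial.coeff_X_mul_zero]
      simp [gP_coeff (m+2) (by omega) 0 (by omega), gP_coeff (m+1) (by omega) 0 (by omega),
        gc_zero (m+2) (by omega), gc_zero (m+1) (by omega)]
    · obtain ⟨i, rfl⟩ : ∃ i, j = i + 1 := ⟨j - 1, by omega⟩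
      rw [Polynomial.coeff_X_mul]
      set j := i + 1 with hjdef
      have hji : j - 1 = i := by omega
      rw [← hji]
      rcases le_or_gt j (m+2) with hj2 | hj2
      · rw [gP_coeff (m+2) (by omega) j (by omega)]
        rcases le_or_gt j (m+1) with hj3 | hj3
        · rw [gP_coeff (m+1) (by omega) j (by omega), gP_coeff m (by omega) (j-1) (by omega)]
          exact gc_rec m j hm hj
        · -- j = m+2
          have hj4 : j = m + 2 := by omega
          rw [hj4, gP_coeff_big (m+1) (by omega) (m+2) (by omega),
            gP_coeff_big m (by omega) (m+2-1) (by omega)]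
          have c1 : (m + 2 - (m+2)).choose (m+2) = 0 := Nat.choose_eq_zero_of_lt (by omega)
          simp [gc, c1]
      · rw [gP_coeff_big (m+2) (by omega) j (by omega),
          gP_coeff_big (m+1) (by omega) j (by omega),
          gP_coeff_big m (by omega) (j-1) (by omega)]
        ring

lemma gP_one : gP 1 = 1 := by
  rw [gP_eq 1 (by norm_num)]
  have h1 : gc 1 1 = 0 := by norm_num [gc]
  simp [Finset.sum_range_succ, gc_zero 1 (by norm_num), h1]

lemma gP_zero : gP 0 = 2 := by
  rw [show gP 0 = Polynomial.C 2 from if_pos rfl]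
  exact_mod_cast map_ofNat Polynomial.C 2

lemma gP_mul (b : ℕ) : ∀ d : ℕ,
    gP (b + d) * gP b = gP (b + d + b) + (-Polynomial.X)^b * gP d := by
  induction b using Nat.twoStepInduction with
  | zero => intro d; simp [gP_zero]; ring
  | one =>
    intro d
    have h := gP_rec d
    rw [gP_one, show 1 + d = d + 1 by omega, show d + 1 + 1 = d + 2 by omega]
    rw [h]; ring
  | more b IH1 IH2 =>
    intro d
    have e1 : b + 2 + d = b + 1 + (d + 1) := by omega
    have e2 : b + 2 + d = b + (d + 2) := by omega
    have h1 := IH2 (d + 1)   -- IH at b+1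
    have h2 := IH1 (d + 2)   -- IH at b
    rw [← e1] at h1
    rw [← e2] at h2
    have hr : gP (b+2) = gP (b+1) + Polynomial.X * gP b := gP_rec b
    have hr2 : gP (b + 2 + d + (b + 2)) =
        gP (b + 1 + (d + 1) + (b + 1)) + Polynomial.X * gP (b + (d + 2) + b) := by
      have f1 : b + 2 + d + (b + 2) = (b + d + b + 2) + 2 := by omega
      have f2 : b + 1 + (d + 1) + (b + 1) = (b + d + b + 2) + 1 := by omega
      have f3 : b + (d + 2) + b = b + d + b + 2 := by omega
      rw [f1, f2, f3]; exact gP_rec (b + d + b + 2)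
    have hd : gP (d + 2) = gP (d + 1) + Polynomial.X * gP d := gP_rec d
    rw [hr, hr2]
    have expand : gP (b + 2 + d) * (gP (b+1) + Polynomial.X * gP b)
        = gP (b + 2 + d) * gP (b+1) + Polynomial.X * (gP (b + 2 + d) * gP b) := by ring
    rw [expand, h1, h2, hd]
    ring_nf

def Cong (m : ℕ) (P Q : Polynomial ℚ) : Prop := ∀ j < m, P.coeff j = Q.coeff j

lemma cong_mul_right {m : ℕ} {P Q : Polynomial ℚ} (h : Cong m P Q) (R : Polynomial ℚ) :
    Cong m (P * R) (Q * R) := by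
  intro j hj
  rw [Polynomial.coeff_mul, Polynomial.coeff_mul]
  refine Finset.sum_congr rfl fun p hp => ?_
  rw [Finset.HasAntidiagonal.mem_antidiagonal] at hp
  rw [h p.1 (by omega)]

lemma coeff_negX_pow_mul (b : ℕ) (R : Polynomial ℚ) (j : ℕ) (hj : j < b) :
    ((-Polynomial.X)^b * R).coeff j = 0 := by
  have : (-Polynomial.X)^b * R = ((-1 : Polynomial ℚ)^b * R) * Polynomial.X^b := by ring
  rw [this, Polynomial.coeff_mul_X_pow']
  simp [Nat.not_le.mpr hj]

lemma cong_pow (n : ℕ) (_hn : 1 ≤ n) : ∀ k : ℕ, 1 ≤ k → Cong n (gP n ^ k) (gP (n * k)) := by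
  intro k
  induction k with
  | zero => omega
  | succ k IH =>
    intro _
    rcases Nat.eq_zero_or_pos k with rfl | hk
    · intro j hj; simp
    · have h1 : Cong n (gP n ^ (k+1)) (gP (n*k) * gP n) := by
        rw [pow_succ]
        exact cong_mul_right (IH hk) (gP n)
      have e1 : n + n * (k - 1) = n * k := by
        obtain ⟨k', rfl⟩ : ∃ k', k = k' + 1 := ⟨k - 1, by omega⟩
        simp [Nat.mul_succ]; omega
      have h2 := gP_mul n (n * (k - 1))
      rw [e1] at h2
      have e2 : n * k + n = n * (k + 1) := by ring
      intro j hj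
      rw [h1 j hj, h2, e2]
      rw [Polynomial.coeff_add, coeff_negX_pow_mul n _ j hj, add_zero]

theorem truncation_of_g_pow' (n : ℕ) (hn : 2 ≤ n) (φ : PowerSeries ℚ)
    (hconst : PowerSeries.constantCoeff φ = 1)
    (hpow : φ ^ n = ((gP n : PowerSeries ℚ)) ^ (n - 1)) :
    ∀ j : ℕ, j ≤ n - 2 → PowerSeries.coeff j φ = (gP (n - 1)).coeff j := by
  -- the polynomial congruence
  have hA : Cong n (gP n ^ (n-1)) (gP (n * (n-1))) := cong_pow n (by omega) (n-1) (by omega)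
  have hB : Cong (n-1) (gP (n-1) ^ n) (gP ((n-1) * n)) := cong_pow (n-1) (by omega) n (by omega)
  have hAB : Cong (n-1) (gP n ^ (n-1)) (gP (n-1) ^ n) := by
    intro j hj
    rw [hA j (by omega), hB j hj, Nat.mul_comm]
  set ψ : PowerSeries ℚ := (gP (n-1) : PowerSeries ℚ) with hψdef
  have hψconst : PowerSeries.constantCoeff ψ = 1 := by
    rw [hψdef, Polynomial.constantCoeff_coe, gP_coeff (n-1) (by omega) 0 (by omega),
      gc_zero (n-1) (by omega)]
  -- coefficients of φ^n and ψ^n agree below n-1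
  have hagree : ∀ j, j < n - 1 →
      PowerSeries.coeff j (φ ^ n) = PowerSeries.coeff j (ψ ^ n) := by
    intro j hj
    rw [hpow, hψdef, ← Polynomial.coe_pow, ← Polynomial.coe_pow,
      Polynomial.coeff_coe, Polynomial.coeff_coe]
    exact hAB j hj
  -- geometric sum identity
  set S : PowerSeries ℚ := ∑ i ∈ Finset.range n, φ ^ i * ψ ^ (n - 1 - i) with hSdef
  have hgeom : S * (φ - ψ) = φ ^ n - ψ ^ n := geom_sum₂_mul φ ψ n
  have hSconst : PowerSeries.constantCoeff S = n := by
    rw [hSdef, map_sum]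
    have : ∀ i ∈ Finset.range n,
        PowerSeries.constantCoeff (φ ^ i * ψ ^ (n - 1 - i)) = 1 := by
      intro i _
      rw [map_mul, map_pow, map_pow, hconst, hψconst, one_pow, one_pow, one_mul]
    rw [Finset.sum_congr rfl this]
    simp
  -- strong induction
  intro j hj
  induction j using Nat.strong_induction_on with
  | _ j IH =>
    have hj' : j ≤ n - 2 := hj
    have hd : PowerSeries.coeff j (S * (φ - ψ)) = 0 := by
      rw [hgeom, map_sub, hagree j (by omega), sub_self]
    rw [PowerSeries.coeff_mul] at hd
    have hsingle : ∀ p ∈ Finset.HasAntidiagonal.antidiagonal j, p ≠ (0, j) →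
        PowerSeries.coeff p.1 S * PowerSeries.coeff p.2 (φ - ψ) = 0 := by
      intro p hp hne
      rw [Finset.HasAntidiagonal.mem_antidiagonal] at hp
      have hp2 : p.2 < j := by
        rcases Nat.lt_or_ge p.2 j with h | h
        · exact h
        · exfalso; apply hne
          have : p.2 = j := by omega
          have : p.1 = 0 := by omega
          exact Prod.ext this ‹p.2 = j›
      have h2 := IH p.2 hp2 (by omega)
      rw [map_sub, h2, hψdef, Polynomial.coeff_coe, sub_self, mul_zero]
    rw [Finset.sum_eq_single_of_mem (0, j) (by simp) hsingle] at hd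
    rw [PowerSeries.coeff_zero_eq_constantCoeff, hSconst, map_sub] at hd
    have hn0 : (n : ℚ) ≠ 0 := Nat.cast_ne_zero.mpr (by omega)
    have := mul_eq_zero.mp hd
    rcases this with h | h
    · exact absurd h hn0
    · have := sub_eq_zero.mp h
      rw [this, hψdef, Polynomial.coeff_coe]
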